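/- Test automaton soundness and completeness: let K = L(G_K) ⊆ L(G) be prefix-closed and controllable, and let 𝒜 be a replacement-removal attack set. Then K is not P-observable under 𝒜 if and only if there exist A, A' ∈ 𝒜, a state (r, x', r') reachable in the test automaton T_{A,A'} from (r₀, x₀, r₀), and σ ∈ Σ_c such that η(r,σ) is defined, ξ(x',σ) is defined, but η(r',σ) is not defined. -/

import Mathlib

variable {S D R X : Type*}

/-- `P : Σ* → Δ*` is an observation map. -/
def IsObsMap (P : List S → List D) : Prop :=
  P [] = [] ∧ (∀ w s : List S, P (w ++ s) = P w ++ P s) ∧ ∀ σ : S, (P [σ]).length ≤ 1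

/-- `A` is the replacement-removal attack generated by `φ : Δ → 2^{Δ ∪ {ε}}`. -/
def IsRRAttack (φ : D → Set (List D)) (A : List D → Set (List D)) : Prop :=
  (∀ t : D, ∀ v ∈ φ t, v.length ≤ 1) ∧ (A [] = {[]}) ∧
  ∀ (y : List D) (t : D),
    A (y ++ [t]) = {v | ∃ wy ∈ A y, ∃ wt ∈ φ t, v = wy ++ wt}

/-- Run of a deterministic partial automaton on a string. -/
def run {Q E : Type*} (δ : Q → E → Option Q) : Q → List E → Option Q
  | q, [] => some q
  | q, e :: l =>
    match δ q e with
    | none => none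
    | some q' => run δ q' l

/-- One step of an automaton by an element of `Σ ∪ {ε}` (an `Option S`):
`ε` leaves the state unchanged. -/
def step {Q : Type*} (δ : Q → S → Option Q) (q : Q) : Option S → Option Q
  | none => some q
  | some σ => δ q σ

/-- The event set `Σ_{T,A,A′}` of the test automaton: pairs in
`(Σ ∪ {ε}) × (Σ ∪ {ε}) \ {(ε,ε)}` whose attacked observations intersect. -/
def SigmaT (P : List S → List D) (A A' : List D → Set (List D)) :
    Set (Option S × Option S) :=
  {p | p ≠ (none, none) ∧ (A (P p.1.toList) ∩ A' (P p.2.toList)).Nonempty}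

/-- Transition map of the test automaton `T_{A,A′}` on states `R × X × R`. -/
def deltaT (η : R → S → Option R) (ξ : X → S → Option X)
    (q : R × X × R) (p : Option S × Option S) : Option (R × X × R) :=
  match step η q.1 p.1, step ξ q.2.1 p.2, step η q.2.2 p.2 with
  | some a, some b, some c => some (a, b, c)
  | _, _, _ => none

/-- First component of a string of pair-events, concatenated. -/
def flat1 (l : List (Option S × Option S)) : List S :=
  l.foldr (fun p acc => p.1.toList ++ acc) []

/-- Second component of a string of pair-events, concatenated. -/
def flat2 (l : List (Option S × Option S)) : List S :=
  l.foldr (fun p acc => p.2.toList ++ acc) []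
/-- `K` is `P`-observable under a family of attacks `Att`. -/
def ObsUnderFam {ι : Type*} (L K : Set (List S)) (P : List S → List D)
    (Att : ι → List D → Set (List D)) : Prop :=
  ∀ w ∈ K, ∀ w' ∈ K,
    (∃ i j : ι, (Att i (P w) ∩ Att j (P w')).Nonempty) →
    ∀ σ : S, ¬((w ++ [σ] ∈ K ∧ w' ++ [σ] ∈ L \ K) ∨
               (w ++ [σ] ∈ L \ K ∧ w' ++ [σ] ∈ K))

lemma run_append {Q E : Type*} (δ : Q → E → Option Q) (q : Q) (l1 l2 : List E) :
    run δ q (l1 ++ l2) = (run δ q l1).bind (fun q' => run δ q' l2) := by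
  induction l1 generalizing q with
  | nil => simp [run]
  | cons e l ih =>
    simp only [List.cons_append, run]
    cases h : δ q e <;> simp [ih]
lemma run_toList {Q : Type*} (δ : Q → S → Option Q) (q : Q) (o : Option S) :
    run δ q o.toList = step δ q o := by
  cases o with
  | none => rfl
  | some σ => cases h : δ q σ <;> simp [run, step, h]

lemma deltaT_eq_some (η : R → S → Option R) (ξ : X → S → Option X)
    (q q1 : R × X × R) (p : Option S × Option S) :
    deltaT η ξ q p = some q1 ↔
      step η q.1 p.1 = some q1.1 ∧ step ξ q.2.1 p.2 = some q1.2.1 ∧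
        step η q.2.2 p.2 = some q1.2.2 := by
  unfold deltaT
  cases h1 : step η q.1 p.1 <;> cases h2 : step ξ q.2.1 p.2 <;>
    cases h3 : step η q.2.2 p.2 <;>
    simp [Prod.ext_iff, eq_comm, and_assoc]

lemma flat1_cons (e : Option S × Option S) (l : List (Option S × Option S)) :
    flat1 (e :: l) = e.1.toList ++ flat1 l := rfl
lemma flat2_cons (e : Option S × Option S) (l : List (Option S × Option S)) :
    flat2 (e :: l) = e.2.toList ++ flat2 l := rfl

lemma runT_some (η : R → S → Option R) (ξ : X → S → Option X)
    (q q' : R × X × R) (l : List (Option S × Option S))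
    (h : run (deltaT η ξ) q l = some q') :
    run η q.1 (flat1 l) = some q'.1 ∧ run ξ q.2.1 (flat2 l) = some q'.2.1 ∧
      run η q.2.2 (flat2 l) = some q'.2.2 := by
  induction l generalizing q with
  | nil =>
    simp only [run, Option.some.injEq] at h
    subst h
    exact ⟨rfl, rfl, rfl⟩
  | cons e l ih =>
    rw [run] at h
    cases hd : deltaT η ξ q e with
    | none => rw [hd] at h; exact absurd h (by simp)
    | some q1 =>
      rw [hd] at h
      obtain ⟨h1, h2, h3⟩ := ih q1 h
      obtain ⟨g1, g2, g3⟩ := (deltaT_eq_some η ξ q q1 e).mp hd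
      refine ⟨?_, ?_, ?_⟩
      · rw [flat1_cons, run_append, run_toList, g1]; exact h1
      · rw [flat2_cons, run_append, run_toList, g2]; exact h2
      · rw [flat2_cons, run_append, run_toList, g3]; exact h3

lemma runT_of (η : R → S → Option R) (ξ : X → S → Option X)
    (q : R × X × R) (a : R) (b : X) (c : R) (l : List (Option S × Option S))
    (h1 : run η q.1 (flat1 l) = some a) (h2 : run ξ q.2.1 (flat2 l) = some b)
    (h3 : run η q.2.2 (flat2 l) = some c) :
    run (deltaT η ξ) q l = some (a, b, c) := by
  induction l generalizing q with
  | nil =>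
    simp only [flat1, flat2, List.foldr_nil, run, Option.some.injEq] at h1 h2 h3
    rw [run, show q = (a,b,c) from Prod.ext h1 (Prod.ext h2 h3)]
  | cons e l ih =>
    rw [flat1_cons, run_append, run_toList] at h1
    rw [flat2_cons, run_append, run_toList] at h2 h3
    obtain ⟨a1, ga, h1⟩ := Option.bind_eq_some_iff.mp h1
    obtain ⟨b1, gb, h2⟩ := Option.bind_eq_some_iff.mp h2
    obtain ⟨c1, gc, h3⟩ := Option.bind_eq_some_iff.mp h3
    rw [run, (deltaT_eq_some η ξ q (a1,b1,c1) e).mpr ⟨ga, gb, gc⟩]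
    exact ih (a1,b1,c1) h1 h2 h3

lemma att_append {φ : D → Set (List D)} {A : List D → Set (List D)}
    (h : IsRRAttack φ A) (y z : List D) :
    A (y ++ z) = {v | ∃ a ∈ A y, ∃ b ∈ A z, v = a ++ b} := by
  induction z using List.reverseRecOn with
  | nil => ext v; simp [h.2.1]
  | append_singleton z t ih =>
    rw [← List.append_assoc, h.2.2 (y ++ z) t, h.2.2 z t]
    ext v
    simp only [Set.mem_setOf_eq, ih]
    constructor
    · rintro ⟨wy, ⟨a, ha, b, hb, rfl⟩, wt, hwt, rfl⟩
      exact ⟨a, ha, b ++ wt, ⟨b, hb, wt, hwt, rfl⟩, by simp⟩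
    · rintro ⟨a, ha, _, ⟨b, hb, wt, hwt, rfl⟩, rfl⟩
      exact ⟨a ++ b, ⟨a, ha, b, hb, rfl⟩, wt, hwt, by simp⟩

lemma att_short {φ : D → Set (List D)} {A : List D → Set (List D)}
    (h : IsRRAttack φ A) {y : List D} (hy : y.length ≤ 1) {v : List D}
    (hv : v ∈ A y) : v.length ≤ 1 := by
  match y, hy with
  | [], _ => rw [h.2.1] at hv; simp at hv; simp [hv]
  | [t], _ =>
    rw [show [t] = [] ++ [t] from rfl, h.2.2 [] t] at hv
    obtain ⟨wy, hwy, wt, hwt, rfl⟩ := hv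
    rw [h.2.1] at hwy; simp at hwy; subst hwy
    simpa using h.1 t wt hwt

lemma att_cons {P : List S → List D} (hP : IsObsMap P)
    {φ : D → Set (List D)} {A : List D → Set (List D)} (hA : IsRRAttack φ A)
    (σ : S) (w : List S) {u : List D} (hu : u ∈ A (P (σ :: w))) :
    ∃ a u2, a ∈ A (P [σ]) ∧ u2 ∈ A (P w) ∧ u = a ++ u2 ∧ a.length ≤ 1 := by
  rw [show σ :: w = [σ] ++ w from rfl, hP.2.1, att_append hA] at hu
  obtain ⟨a, ha, b, hb, rfl⟩ := hu
  exact ⟨a, b, ha, hb, rfl, att_short hA (hP.2.2 σ) ha⟩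

lemma mem_SigmaT {P : List S → List D} {A A' : List D → Set (List D)}
    {p : Option S × Option S} :
    p ∈ SigmaT P A A' ↔ p ≠ (none, none) ∧
      (A (P p.1.toList) ∩ A' (P p.2.toList)).Nonempty := Iff.rfl

lemma nil_mem_att_nil {P : List S → List D} (hP : IsObsMap P)
    {φ : D → Set (List D)} {A : List D → Set (List D)} (hA : IsRRAttack φ A) :
    ([] : List D) ∈ A (P []) := by
  rw [hP.1, hA.2.1]; rfl

lemma events_inter {ι : Type*} {P : List S → List D} (hP : IsObsMap P)
    {Att : ι → List D → Set (List D)} {φs : ι → D → Set (List D)}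
    (hAtt : ∀ i, IsRRAttack (φs i) (Att i)) (i j : ι)
    (l : List (Option S × Option S))
    (hl : ∀ e ∈ l, e ∈ SigmaT P (Att i) (Att j)) :
    (Att i (P (flat1 l)) ∩ Att j (P (flat2 l))).Nonempty := by
  induction l with
  | nil =>
    exact ⟨[], nil_mem_att_nil hP (hAtt i), nil_mem_att_nil hP (hAtt j)⟩
  | cons e l ih =>
    obtain ⟨u, hu1, hu2⟩ := (hl e List.mem_cons_self).2
    obtain ⟨v, hv1, hv2⟩ := ih (fun e' he' => hl e' (List.mem_cons_of_mem _ he'))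
    refine ⟨u ++ v, ?_, ?_⟩
    · rw [flat1_cons, hP.2.1, att_append (hAtt i)]
      exact ⟨u, hu1, v, hv1, rfl⟩
    · rw [flat2_cons, hP.2.1, att_append (hAtt j)]
      exact ⟨u, hu2, v, hv2, rfl⟩

lemma merge {ι : Type*} {P : List S → List D} (hP : IsObsMap P)
    {Att : ι → List D → Set (List D)} {φs : ι → D → Set (List D)}
    (hAtt : ∀ i, IsRRAttack (φs i) (Att i)) (i j : ι) :
    ∀ (n : ℕ) (w w' : List S) (u : List D), w.length + w'.length ≤ n →
      u ∈ Att i (P w) → u ∈ Att j (P w') →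
      ∃ l : List (Option S × Option S), flat1 l = w ∧ flat2 l = w' ∧
        ∀ e ∈ l, e ∈ SigmaT P (Att i) (Att j) := by
  intro n
  induction n with
  | zero =>
    intro w w' u hn hu hu'
    obtain ⟨rfl, rfl⟩ : w = [] ∧ w' = [] := by
      constructor <;> rw [← List.length_eq_zero_iff] <;> omega
    exact ⟨[], rfl, rfl, by simp⟩
  | succ n ih =>
    rintro (_ | ⟨σ, w2⟩) w' u hn hu hu'
    · -- w = []
      rw [hP.1, (hAtt i).2.1] at hu
      simp only [Set.mem_singleton_iff] at hu; subst hu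
      rcases w' with _ | ⟨σ', w2'⟩
      · exact ⟨[], rfl, rfl, by simp⟩
      · obtain ⟨a', u2', ha', hu2', heq, _⟩ := att_cons hP (hAtt j) σ' w2' hu'
        obtain ⟨rfl, rfl⟩ : a' = [] ∧ u2' = [] := by
          simpa using List.append_eq_nil_iff.mp heq.symm
        obtain ⟨l, hl1, hl2, hl3⟩ := ih [] w2' []
          (by simp at hn ⊢; omega)
          (by rw [hP.1, (hAtt i).2.1]; rfl) hu2'
        refine ⟨(none, some σ') :: l, by simpa [flat1_cons] using hl1,
          by simp [flat2_cons, hl2], ?_⟩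
        intro e he
        rcases List.mem_cons.mp he with rfl | he
        · exact mem_SigmaT.mpr ⟨by simp, [], nil_mem_att_nil hP (hAtt i), ha'⟩
        · exact hl3 e he
    · -- w = σ :: w2
      obtain ⟨a, u2, ha, hu2, hequ, hla⟩ := att_cons hP (hAtt i) σ w2 hu
      rcases a with _ | ⟨c, _ | ⟨c2, a⟩⟩
      · -- a = []
        simp only [List.nil_append] at hequ; subst hequ
        obtain ⟨l, hl1, hl2, hl3⟩ := ih w2 w' u
          (by simp at hn ⊢; omega) hu2 hu'
        refine ⟨(some σ, none) :: l, by simp [flat1_cons, hl1],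
          by simpa [flat2_cons] using hl2, ?_⟩
        intro e he
        rcases List.mem_cons.mp he with rfl | he
        · exact mem_SigmaT.mpr ⟨by simp, [], ha, nil_mem_att_nil hP (hAtt j)⟩
        · exact hl3 e he
      · -- a = [c]
        subst hequ
        rcases w' with _ | ⟨σ', w2'⟩
        · rw [hP.1, (hAtt j).2.1] at hu'
          simp at hu'
        · obtain ⟨a', u2', ha', hu2', hequ', hla'⟩ := att_cons hP (hAtt j) σ' w2' hu'
          rcases a' with _ | ⟨c', _ | ⟨c2', a'⟩⟩
          · -- a' = []
            simp only [List.nil_append] at hequ'; subst hequ'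
            obtain ⟨l, hl1, hl2, hl3⟩ := ih (σ :: w2) w2' ([c] ++ u2)
              (by simp at hn ⊢; omega) hu hu2'
            refine ⟨(none, some σ') :: l, by simpa [flat1_cons] using hl1,
              by simp [flat2_cons, hl2], ?_⟩
            intro e he
            rcases List.mem_cons.mp he with rfl | he
            · exact mem_SigmaT.mpr ⟨by simp, [], nil_mem_att_nil hP (hAtt i), ha'⟩
            · exact hl3 e he
          · -- a' = [c']
            obtain ⟨rfl, rfl⟩ : c = c' ∧ u2 = u2' := by simpa using hequ'
            obtain ⟨l, hl1, hl2, hl3⟩ := ih w2 w2' u2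
              (by simp at hn ⊢; omega) hu2 hu2'
            refine ⟨(some σ, some σ') :: l, by simp [flat1_cons, hl1],
              by simp [flat2_cons, hl2], ?_⟩
            intro e he
            rcases List.mem_cons.mp he with rfl | he
            · exact mem_SigmaT.mpr ⟨by simp, [c], ha, ha'⟩
            · exact hl3 e he
          · simp at hla'
      · simp at hla

/-- for prefix-closed controllable `K = L(G_K) ⊆ L = L(G)` and a
replacement-removal attack set, `K` is not `P`-observable under the attack set iff
some test automaton `T_{A,A′}` has a reachable state `(r,x′,r′)` and a controllable
event `σ` with `η(r,σ)!`, `ξ(x′,σ)!`, and `¬η(r′,σ)!`. -/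
theorem stmt18 {ι : Type*} (Sc Su : Set S) (hpart : Sc ∪ Su = Set.univ)
    (hdisj : Disjoint Sc Su)
    (P : List S → List D) (hP : IsObsMap P)
    (Att : ι → List D → Set (List D)) (φs : ι → D → Set (List D))
    (hAtt : ∀ i, IsRRAttack (φs i) (Att i))
    (η : R → S → Option R) (ξ : X → S → Option X) (r₀ : R) (x₀ : X)
    (hKL : ∀ w : List S, (run η r₀ w).isSome → (run ξ x₀ w).isSome)
    (hcont : ∀ w : List S, (run η r₀ w).isSome → ∀ σ ∈ Su,
      (run ξ x₀ (w ++ [σ])).isSome → (run η r₀ (w ++ [σ])).isSome) :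
    ¬ObsUnderFam {w | (run ξ x₀ w).isSome} {w | (run η r₀ w).isSome} P Att ↔
      ∃ (i j : ι) (q : R × X × R),
        (∃ l : List (Option S × Option S),
          (∀ e ∈ l, e ∈ SigmaT P (Att i) (Att j)) ∧
          run (deltaT η ξ) (r₀, x₀, r₀) l = some q) ∧
        ∃ σ ∈ Sc, (η q.1 σ).isSome ∧ (ξ q.2.1 σ).isSome ∧ ¬(η q.2.2 σ).isSome := by
  constructor
  · -- completeness: not observable → bad reachable state
    intro hno
    unfold ObsUnderFam at hno
    push_neg at hno
    obtain ⟨w, hw, w', hw', ⟨i, j, hint⟩, σ, hbad⟩ := hno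
    simp only [Set.mem_setOf_eq] at hw hw'
    have key : ∀ (i j : ι) (w w' : List S), (run η r₀ w).isSome →
        (run η r₀ w').isSome → (Att i (P w) ∩ Att j (P w')).Nonempty →
        (run η r₀ (w ++ [σ])).isSome → (run ξ x₀ (w' ++ [σ])).isSome →
        ¬(run η r₀ (w' ++ [σ])).isSome →
        ∃ (i j : ι) (q : R × X × R),
          (∃ l : List (Option S × Option S),
            (∀ e ∈ l, e ∈ SigmaT P (Att i) (Att j)) ∧
            run (deltaT η ξ) (r₀, x₀, r₀) l = some q) ∧
          ∃ σ ∈ Sc, (η q.1 σ).isSome ∧ (ξ q.2.1 σ).isSome ∧ ¬(η q.2.2 σ).isSome := by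
      clear hw hw' hint hbad w w'
      intro i j w w' hw hw' hint hwσ hw'ξ hw'σ
      obtain ⟨a, ha⟩ := Option.isSome_iff_exists.mp hw
      obtain ⟨c, hc⟩ := Option.isSome_iff_exists.mp hw'
      obtain ⟨b, hb⟩ := Option.isSome_iff_exists.mp (hKL w' hw')
      obtain ⟨u, hu1, hu2⟩ := hint
      obtain ⟨l, hl1, hl2, hl3⟩ := merge hP hAtt i j (w.length + w'.length) w w' u
        le_rfl hu1 hu2
      have hσc : σ ∈ Sc := by
        by_contra hσc
        have hσu : σ ∈ Su := by
          have h : σ ∈ Sc ∪ Su := hpart ▸ Set.mem_univ σ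
          exact h.resolve_left hσc
        exact hw'σ (hcont w' hw' σ hσu hw'ξ)
      refine ⟨i, j, (a, b, c), ⟨l, hl3, ?_⟩, σ, hσc, ?_, ?_, ?_⟩
      · exact runT_of η ξ (r₀, x₀, r₀) a b c l (by rw [hl1]; exact ha)
          (by rw [hl2]; exact hb) (by rw [hl2]; exact hc)
      · rw [run_append, ha] at hwσ
        simpa [show ∀ (d : R), run η d [σ] = step η d (some σ) from
          fun d => run_toList η d (some σ), step] using hwσ
      · rw [run_append, hb] at hw'ξ
        simpa [show ∀ (d : X), run ξ d [σ] = step ξ d (some σ) from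
          fun d => run_toList ξ d (some σ), step] using hw'ξ
      · rw [run_append, hc] at hw'σ
        simpa [show ∀ (d : R), run η d [σ] = step η d (some σ) from
          fun d => run_toList η d (some σ), step] using hw'σ
    rcases hbad with ⟨h1, h2⟩ | ⟨h1, h2⟩
    · exact key i j w w' hw hw' hint (by exact h1) h2.1 h2.2
    · obtain ⟨u, hu1, hu2⟩ := hint
      exact key j i w' w hw' hw ⟨u, hu2, hu1⟩ (by exact h2) h1.1 h1.2
  · -- soundness: bad reachable state → not observable
    rintro ⟨i, j, q, ⟨l, hl, hrun⟩, σ, hσc, h1, h2, h3⟩ hobs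
    obtain ⟨g1, g2, g3⟩ := runT_some η ξ (r₀, x₀, r₀) q l hrun
    have hrunσ : ∀ (d : R), run η d [σ] = η d σ := fun d => run_toList η d (some σ)
    have hrunσ' : ∀ (d : X), run ξ d [σ] = ξ d σ := fun d => run_toList ξ d (some σ)
    refine hobs (flat1 l) ?_ (flat2 l) ?_
      ⟨i, j, events_inter hP hAtt i j l hl⟩ σ (Or.inl ⟨?_, ?_, ?_⟩)
    · exact Option.isSome_iff_exists.mpr ⟨q.1, g1⟩
    · exact Option.isSome_iff_exists.mpr ⟨q.2.2, g3⟩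
    · show (run η r₀ (flat1 l ++ [σ])).isSome
      rw [run_append, g1]
      simpa [hrunσ] using h1
    · show (run ξ x₀ (flat2 l ++ [σ])).isSome
      rw [run_append, g2]
      simpa [hrunσ'] using h2
    · show ¬(run η r₀ (flat2 l ++ [σ])).isSome
      rw [run_append, g3]
      simpa [hrunσ] using h3
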